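/- For each i in a finite index set {1,…,m}, let Ω_i be a finite nonempty set and let G_i be a group acting primitively on Ω_i. Then the direct product G = G_1 × ⋯ × G_m, acting componentwise on Ω = Ω_1 × ⋯ × Ω_m, is pre-primitive: every G-invariant equivalence relation on Ω is the orbit equivalence relation of some subgroup of G. -/

import Mathlib

/-- A relation on `Ω` is `G`-invariant if it is preserved by the action of every
element of `G`. -/
def MulInvariant (G : Type*) {Ω : Type*} [Group G] [MulAction G Ω]
    (r : Ω → Ω → Prop) : Prop :=
  ∀ (g : G) (x y : Ω), r x y ↔ r (g • x) (g • y)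

/-- A transitive group action is pre-primitive if every invariant equivalence
relation is the orbit equivalence relation of some subgroup. -/
def PrePrimitive (G Ω : Type*) [Group G] [MulAction G Ω] : Prop :=
  ∀ r : Ω → Ω → Prop, Equivalence r → MulInvariant G r →
    ∃ N : Subgroup G, ∀ x y : Ω, r x y ↔ ∃ n ∈ N, n • x = y

/-!
Let `r` be an invariant equivalence relation on `∏ i, Ω i`. For each coordinate `i`, the relation
"changing the `i`-th coordinate from `a` to `b` stays inside an `r`-class" (`coordRel`) and the
projection of `r` to the `i`-th coordinate (`projRel`) are `G i`-invariant equivalence relations on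
`Ω i`, so each is equality or universal. The subgroup is `N = {g | ∀ x, r x (g • x)}`. Given `r x y`,
pick `n` with `n • x = y` that is trivial on the coordinates where `x` and `y` agree. On every
other coordinate either `coordRel` is universal, so that coordinate may be changed freely, or
`coordRel` is equality while `projRel` is universal. In the latter case point stabilisers of
`G i` fix `Ω i` pointwise (if `h • a = a`, pick `r x y` with `x i = a`, `y i = b`; acting by `h` in
coordinate `i` fixes `x`, so it keeps `y` in its class, forcing `h • b = b`), and since they are
maximal subgroups, `G i` acts commutatively. So for `z = g • x` the points `g • y` and `n • z`
differ only in freely changeable coordinates, and `r z (g • y)` gives `r z (n • z)`, i.e. `n ∈ N`.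
-/

open Function MulAction

def OnlyTrivialInvariantEquivalences (G Ω : Type*) [Group G] [MulAction G Ω] : Prop :=
  ∀ r : Ω → Ω → Prop, Equivalence r → MulInvariant G r →
    (∀ x y : Ω, r x y ↔ x = y) ∨ ∀ x y : Ω, r x y

section SingleAction

variable {G Ω : Type*} [Group G] [MulAction G Ω]

theorem MulInvariant.of_forall_imp {r : Ω → Ω → Prop}
    (h : ∀ (g : G) (x y : Ω), r x y → r (g • x) (g • y)) : MulInvariant G r :=
  fun g x y => ⟨h g x y, fun hg => by simpa using h g⁻¹ _ _ hg⟩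

theorem isPreprimitive_of_onlyTrivialInvariantEquivalences [IsPretransitive G Ω]
    (hprim : OnlyTrivialInvariantEquivalences G Ω) : IsPreprimitive G Ω where
  isTrivialBlock_of_isBlock {B} hB := by
    let sep : Ω → Ω → Prop := fun u v => ∀ g : G, g • u ∈ B ↔ g • v ∈ B
    have hequiv : Equivalence sep :=
      ⟨fun _ _ => Iff.rfl, fun h g => (h g).symm, fun h₁ h₂ g => (h₁ g).trans (h₂ g)⟩
    have hinv : MulInvariant G sep :=
      .of_forall_imp fun h u v huv g => by simpa only [smul_smul] using huv (g * h)
    rcases hprim sep hequiv hinv with hdiag | huniv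
    · left
      intro u hu v hv
      refine (hdiag u v).1 fun g => ⟨fun hgu => ?_, fun hgv => ?_⟩
      · rw [← hB.smul_eq_of_mem hu hgu]
        exact Set.smul_mem_smul_set hv
      · rw [← hB.smul_eq_of_mem hv hgv]
        exact Set.smul_mem_smul_set hu
    · rcases B.eq_empty_or_nonempty with rfl | ⟨b, hb⟩
      · exact .inl Set.subsingleton_empty
      · refine .inr <| Set.eq_univ_of_forall fun u => ?_
        simpa using (huniv u b 1).2 (by simpa using hb)

theorem IsPreprimitive.smul_left_comm_of_stabilizer_fixes [IsPreprimitive G Ω]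
    (hfix : ∀ (g : G) (a b : Ω), g • a = a → g • b = b) (g k : G) (ω : Ω) :
    g • k • ω = k • g • ω := by
  by_cases hg : g • ω = ω
  · rw [hfix g ω _ hg, hg]
  have : Nontrivial Ω := ⟨⟨_, _, hg⟩⟩
  let C : Subgroup G := (Subgroup.centralizer {toPerm g}).comap (toPermHom G Ω)
  have hC : ∀ k : G, k ∈ C ↔ ∀ ω : Ω, g • k • ω = k • g • ω := by
    simp [C, Subgroup.mem_centralizer_singleton_iff, Equiv.Perm.ext_iff, eq_comm]
  have hlt : stabilizer G ω < C := by
    refine SetLike.lt_iff_le_and_exists.2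
      ⟨fun s hs => (hC s).2 fun a => ?_, g, (hC g).2 fun _ => rfl, hg⟩
    rw [hfix s ω a hs, hfix s ω _ hs]
  have hCtop := (IsPreprimitive.isCoatom_stabilizer_of_isPreprimitive G ω).lt_iff.1 hlt
  exact (hC k).1 (hCtop ▸ Subgroup.mem_top k) ω

variable (G) in
def relKernel {r : Ω → Ω → Prop} (hr : Equivalence r) : Subgroup G where
  carrier := {g | ∀ x, r x (g • x)}
  one_mem' x := by simpa using hr.refl x
  mul_mem' {a b} ha hb x := by
    rw [mul_smul]
    exact hr.trans (hb x) (ha (b • x))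
  inv_mem' {a} ha x := by simpa using hr.symm (ha (a⁻¹ • x))

end SingleAction

section Product

variable {ι : Type*} {Ω : ι → Type*} {G : ι → Type*} [∀ i, Group (G i)]
  [∀ i, MulAction (G i) (Ω i)]

instance Pi.isPretransitive [∀ i, IsPretransitive (G i) (Ω i)] :
    IsPretransitive (∀ i, G i) (∀ i, Ω i) where
  exists_smul_eq x y := by
    choose g hg using fun i => exists_smul_eq (G i) (x i) (y i)
    exact ⟨g, funext hg⟩

variable [DecidableEq ι]

theorem Pi.mulSingle_smul_eq_update (i : ι) (g : G i) (x : ∀ j, Ω j) :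
    Pi.mulSingle i g • x = update x i (g • x i) := by
  funext j
  rcases eq_or_ne j i with rfl | hj <;> simp [Pi.smul_apply', *]

theorem Pi.smul_update_of_apply_eq_one {g : ∀ j, G j} {i : ι} (hg : g i = 1) (x : ∀ j, Ω j)
    (c : Ω i) : g • update x i c = update (g • x) i c := by
  funext j
  rcases eq_or_ne j i with rfl | hj <;> simp [Pi.smul_apply', *]

theorem Pi.exists_smul_eq_of_apply_eq [∀ i, IsPretransitive (G i) (Ω i)] {x y : ∀ j, Ω j}
    {i : ι} (h : x i = y i) : ∃ g : ∀ j, G j, g i = 1 ∧ g • x = y := by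
  obtain ⟨g, rfl⟩ := exists_smul_eq (∀ j, G j) x y
  refine ⟨update g i 1, update_self .., funext fun j => ?_⟩
  rcases eq_or_ne j i with rfl | hj
  · simpa [Pi.smul_apply'] using h
  · simp [Pi.smul_apply', hj]

variable (r : (∀ i, Ω i) → (∀ i, Ω i) → Prop)

def coordRel (i : ι) (a b : Ω i) : Prop := ∀ x, r (update x i a) (update x i b)

def projRel (i : ι) (a b : Ω i) : Prop := ∃ x y, r x y ∧ x i = a ∧ y i = b

variable {r}

theorem equivalence_coordRel (hr : Equivalence r) (i : ι) : Equivalence (coordRel r i) :=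
  ⟨fun _ _ => hr.refl _, fun h x => hr.symm (h x), fun h₁ h₂ x => hr.trans (h₁ x) (h₂ x)⟩

theorem mulInvariant_coordRel (hinv : MulInvariant (∀ j, G j) r) (i : ι) :
    MulInvariant (G i) (coordRel r i) :=
  .of_forall_imp fun g a b h x => by
    simpa [Pi.mulSingle_smul_eq_update] using (hinv (Pi.mulSingle i g) _ _).1 (h x)

theorem coordRel_of_rel_update [∀ i, IsPretransitive (G i) (Ω i)]
    (hinv : MulInvariant (∀ j, G j) r) {x : ∀ j, Ω j} {i : ι} {a b : Ω i}
    (h : r (update x i a) (update x i b)) : coordRel r i a b := fun z => by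
  obtain ⟨g, hgi, hgx⟩ :=
    Pi.exists_smul_eq_of_apply_eq (G := G) (y := update z i (x i)) (update_self ..).symm
  simpa [Pi.smul_update_of_apply_eq_one hgi, hgx] using (hinv g _ _).1 h

theorem equivalence_projRel [∀ i, IsPretransitive (G i) (Ω i)] (hr : Equivalence r)
    (hinv : MulInvariant (∀ j, G j) r) (x₀ : ∀ j, Ω j) (i : ι) : Equivalence (projRel r i) where
  refl a := ⟨update x₀ i a, update x₀ i a, hr.refl _, update_self .., update_self ..⟩
  symm := fun ⟨x, y, hxy, hx, hy⟩ => ⟨y, x, hr.symm hxy, hy, hx⟩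
  trans := fun ⟨x, y, hxy, hx, hy⟩ ⟨u, v, huv, hu, hv⟩ => by
    obtain ⟨g, hgi, rfl⟩ := Pi.exists_smul_eq_of_apply_eq (G := G) (hu.trans hy.symm)
    exact ⟨x, g • v, hr.trans hxy ((hinv g u v).1 huv), hx, by simp [Pi.smul_apply', hgi, hv]⟩

theorem mulInvariant_projRel (hinv : MulInvariant (∀ j, G j) r) (i : ι) :
    MulInvariant (G i) (projRel r i) :=
  .of_forall_imp fun g _ _ ⟨x, y, hxy, hx, hy⟩ =>
    ⟨Pi.mulSingle i g • x, Pi.mulSingle i g • y, (hinv _ x y).1 hxy,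
      by simp [hx], by simp [hy]⟩

theorem smul_eq_self_of_forall_projRel [∀ i, IsPretransitive (G i) (Ω i)] (hr : Equivalence r)
    (hinv : MulInvariant (∀ j, G j) r) {i : ι} (hcoord : ∀ a b, coordRel r i a b → a = b)
    (hproj : ∀ a b, projRel r i a b) {g : G i} {a : Ω i} (hga : g • a = a) (b : Ω i) :
    g • b = b := by
  obtain ⟨x, y, hxy, rfl, rfl⟩ := hproj a b
  have hgx : Pi.mulSingle i g • x = x := by rw [Pi.mulSingle_smul_eq_update, hga, update_eq_self]
  have hgy : r x (update y i (g • y i)) := by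
    simpa [hgx, Pi.mulSingle_smul_eq_update] using (hinv (Pi.mulSingle i g) x y).1 hxy
  have hy : r (update y i (y i)) (update y i (g • y i)) := by
    simpa using hr.trans (hr.symm hxy) hgy
  exact (hcoord _ _ (coordRel_of_rel_update hinv hy)).symm

theorem rel_of_forall_eq_or_coordRel [Fintype ι] (hr : Equivalence r) {x y : ∀ i, Ω i}
    (h : ∀ i, x i = y i ∨ coordRel r i (x i) (y i)) : r x y := by
  suffices ∀ s : Finset ι, r x (s.piecewise y x) by simpa using this .univ
  intro s
  induction s using Finset.induction_on with
  | empty => simpa using hr.refl x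
  | insert i s hi ih =>
    rw [Finset.piecewise_insert]
    refine hr.trans ih ?_
    have hxi : update (s.piecewise y x) i (x i) = s.piecewise y x := by
      rw [← s.piecewise_eq_of_notMem y x hi, update_eq_self]
    rcases h i with hi | hi
    · rw [← hi, hxi]; exact hr.refl _
    · simpa only [hxi] using hi (s.piecewise y x)

theorem eq_or_forall_coordRel_or_smul_left_comm [∀ i, IsPretransitive (G i) (Ω i)]
    (hprim : ∀ i, OnlyTrivialInvariantEquivalences (G i) (Ω i)) (hr : Equivalence r)
    (hinv : MulInvariant (∀ j, G j) r) {x y : ∀ j, Ω j} (hxy : r x y) (i : ι) :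
    x i = y i ∨ (∀ a b, coordRel r i a b) ∨ ∀ (g k : G i) (ω : Ω i), g • k • ω = k • g • ω := by
  rcases hprim i _ (equivalence_coordRel hr i) (mulInvariant_coordRel hinv i) with hcoord | hcoord
  · rcases hprim i _ (equivalence_projRel hr hinv x i) (mulInvariant_projRel hinv i) with hproj | hproj
    · exact .inl <| (hproj _ _).1 ⟨x, y, hxy, rfl, rfl⟩
    · have := isPreprimitive_of_onlyTrivialInvariantEquivalences (hprim i)
      exact .inr <| .inr <| IsPreprimitive.smul_left_comm_of_stabilizer_fixes fun g a b hga =>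
        smul_eq_self_of_forall_projRel hr hinv (fun a b => (hcoord a b).1) hproj hga b
  · exact .inr <| .inl hcoord

theorem exists_mem_relKernel_smul_eq [Fintype ι] [∀ i, IsPretransitive (G i) (Ω i)]
    (hprim : ∀ i, OnlyTrivialInvariantEquivalences (G i) (Ω i)) (hr : Equivalence r)
    (hinv : MulInvariant (∀ j, G j) r) {x y : ∀ j, Ω j} (hxy : r x y) :
    ∃ n ∈ relKernel (∀ j, G j) hr, n • x = y := by
  have hmove : ∀ i, ∃ g : G i, g • x i = y i ∧ (x i = y i → g = 1) := fun i => by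
    by_cases hi : x i = y i
    · exact ⟨1, by rw [one_smul, hi], fun _ => rfl⟩
    · obtain ⟨g, hg⟩ := exists_smul_eq (G i) (x i) (y i)
      exact ⟨g, hg, fun h => absurd h hi⟩
  choose n hnx hn_one using hmove
  refine ⟨n, fun z => ?_, funext hnx⟩
  obtain ⟨g, rfl⟩ := exists_smul_eq (∀ j, G j) x z
  refine hr.trans ((hinv g x y).1 hxy) (rel_of_forall_eq_or_coordRel hr fun i => ?_)
  rcases eq_or_forall_coordRel_or_smul_left_comm hprim hr hinv hxy i with hi | hi | hi
  · left; simp [Pi.smul_apply', hn_one i hi, ← hi]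
  · exact .inr (hi _ _)
  · left; simp only [Pi.smul_apply', ← hnx i, hi]

end Product

theorem prePrimitive_pi_of_primitive_general {ι : Type*} [Fintype ι]
    {Ω : ι → Type*} {G : ι → Type*} [∀ i, Group (G i)] [∀ i, MulAction (G i) (Ω i)]
    (hprim : ∀ i, MulAction.IsPretransitive (G i) (Ω i) ∧
      ∀ r : Ω i → Ω i → Prop, Equivalence r → MulInvariant (G i) r →
        (∀ x y : Ω i, r x y ↔ x = y) ∨ (∀ x y : Ω i, r x y)) :
    PrePrimitive (∀ i, G i) (∀ i, Ω i) := by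
  classical
  have : ∀ i, IsPretransitive (G i) (Ω i) := fun i => (hprim i).1
  intro r hr hinv
  refine ⟨relKernel _ hr, fun x y => ⟨fun hxy => ?_, fun ⟨n, hn, hnx⟩ => hnx ▸ hn x⟩⟩
  exact exists_mem_relKernel_smul_eq (fun i => (hprim i).2) hr hinv hxy

/-- A finite direct product of primitive groups, acting
componentwise on the product of the underlying (finite, nonempty) sets, is
pre-primitive. -/
theorem prePrimitive_pi_of_primitive {ι : Type*} [Fintype ι]
    {Ω : ι → Type*} {G : ι → Type*} [∀ i, Group (G i)] [∀ i, MulAction (G i) (Ω i)]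
    [∀ i, Finite (Ω i)] [∀ i, Nonempty (Ω i)]
    (hprim : ∀ i, MulAction.IsPretransitive (G i) (Ω i) ∧
      ∀ r : Ω i → Ω i → Prop, Equivalence r → MulInvariant (G i) r →
        (∀ x y : Ω i, r x y ↔ x = y) ∨ (∀ x y : Ω i, r x y)) :
    PrePrimitive (∀ i, G i) (∀ i, Ω i) :=
  prePrimitive_pi_of_primitive_general hprim
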